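/- Let C be a finite group with identity element e, K a commutative field, L a finitely generated left K[C]-module, and M a free left K[C]-module of rank r with M = ⊕_{c∈C} c·W for a K-subspace W of M. Let t : L × L → M be a C-equivariant K-bilinear map and write t(x,y) = Σ_{c∈C} c·t_c(x,y) with t_c : L × L → W. Then R_{K,C}(t) ≤ R_K(t_e) ≤ r · (dim_K L)², and if moreover t is symmetric then S_{K,C}(t) ≤ S_K(t_e) ≤ r · dim_K(L) · (3·dim_K(L) − 1)/2. -/

import Mathlib

/-- Bilinear complexity `R_K(t)` (valued in `ℕ∞`). -/
noncomputable def Rbil (K : Type*) [Field K] (V W : Type*) [AddCommGroup V] [Module K V]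
    [AddCommGroup W] [Module K W] (t : V →ₗ[K] V →ₗ[K] W) : ℕ∞ :=
  sInf {N : ℕ∞ | ∃ (k : ℕ) (φ ψ : Fin k → (V →ₗ[K] K)) (w : Fin k → W),
    N = k ∧ ∀ x y, t x y = ∑ i, (φ i x * ψ i y) • w i}

/-- Symmetric bilinear complexity `S_K(t)` (valued in `ℕ∞`). -/
noncomputable def Ssym (K : Type*) [Field K] (V W : Type*) [AddCommGroup V] [Module K V]
    [AddCommGroup W] [Module K W] (t : V →ₗ[K] V →ₗ[K] W) : ℕ∞ :=
  sInf {N : ℕ∞ | ∃ (k : ℕ) (φ : Fin k → (V →ₗ[K] K)) (w : Fin k → W),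
    N = k ∧ ∀ x y, t x y = ∑ i, (φ i x * φ i y) • w i}

/-- Equivariant complexity `R_{K,C}(t)` of a `C`-equivariant `K`-bilinear map
between `K[C]`-modules, the module structures given by `K`-linear `C`-actions
`ρL`, `ρM`.  Identifying `K[C]` with `C → K`, a `K[C]`-linear `α : L → K[C]`
satisfies `α (c • l) x = α l (c⁻¹ * x)`, and a pure `C`-equivariant map is
`(x,y) ↦ (α₁ x ⋄ α₂ y) • m = ∑ c, (α₁ x c * α₂ y c) • (c • m)`. -/
noncomputable def RbilC (K : Type*) [Field K] (C : Type*) [Group C] [Fintype C]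
    (L M : Type*) [AddCommGroup L] [Module K L] [AddCommGroup M] [Module K M]
    (ρL : C → L →ₗ[K] L) (ρM : C → M →ₗ[K] M) (t : L →ₗ[K] L →ₗ[K] M) : ℕ∞ :=
  sInf {N : ℕ∞ | ∃ (k : ℕ) (α₁ α₂ : Fin k → (L →ₗ[K] (C → K))) (m : Fin k → M),
    N = k ∧ (∀ i (c : C) (l : L) (x : C), α₁ i (ρL c l) x = α₁ i l (c⁻¹ * x)) ∧
    (∀ i (c : C) (l : L) (x : C), α₂ i (ρL c l) x = α₂ i l (c⁻¹ * x)) ∧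
    ∀ x y, t x y = ∑ i, ∑ c : C, (α₁ i x c * α₂ i y c) • ρM c (m i)}

/-- Symmetric equivariant complexity `S_{K,C}(t)` (valued in `ℕ∞`). -/
noncomputable def SsymC (K : Type*) [Field K] (C : Type*) [Group C] [Fintype C]
    (L M : Type*) [AddCommGroup L] [Module K L] [AddCommGroup M] [Module K M]
    (ρL : C → L →ₗ[K] L) (ρM : C → M →ₗ[K] M) (t : L →ₗ[K] L →ₗ[K] M) : ℕ∞ :=
  sInf {N : ℕ∞ | ∃ (k : ℕ) (α : Fin k → (L →ₗ[K] (C → K))) (m : Fin k → M),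
    N = k ∧ (∀ i (c : C) (l : L) (x : C), α i (ρL c l) x = α i l (c⁻¹ * x)) ∧
    ∀ x y, t x y = ∑ i, ∑ c : C, (α i x c * α i y c) • ρM c (m i)}

open Finset

def emb {n : ℕ} (q : Σ j : Fin n, Fin (j : ℕ)) : Fin n := ⟨q.2.1, q.2.2.trans q.1.2⟩

lemma sum_split {M : Type*} [AddCommMonoid M] {n : ℕ} (A : Fin n → Fin n → M) :
    ∑ j : Fin n, ∑ j' : Fin n, A j j' =
      (∑ j : Fin n, A j j) +
        ∑ q : Σ j : Fin n, Fin (j : ℕ), (A q.1 (emb q) + A (emb q) q.1) := by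
  classical
  have h0 : ∑ j : Fin n, ∑ j' : Fin n, A j j' = ∑ p : Fin n × Fin n, A p.1 p.2 :=
    (Fintype.sum_prod_type (fun p : Fin n × Fin n => A p.1 p.2)).symm
  rw [h0, ← Finset.sum_filter_add_sum_filter_not Finset.univ
      (fun p : Fin n × Fin n => p.2 < p.1) (fun p => A p.1 p.2)]
  have hnotsplit : ∑ p ∈ univ.filter (fun p : Fin n × Fin n => ¬ p.2 < p.1), A p.1 p.2 =
      (∑ p ∈ univ.filter (fun p : Fin n × Fin n => p.1 < p.2), A p.1 p.2) +
        ∑ j : Fin n, A j j := by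
    rw [← Finset.sum_filter_add_sum_filter_not
        (univ.filter (fun p : Fin n × Fin n => ¬ p.2 < p.1))
        (fun p : Fin n × Fin n => p.1 < p.2) (fun p => A p.1 p.2)]
    congr 1
    · apply Finset.sum_congr _ (fun _ _ => rfl)
      rw [Finset.filter_filter]
      apply Finset.filter_congr
      intro p _
      constructor
      · rintro ⟨-, h⟩; exact h
      · intro h; exact ⟨lt_asymm h, h⟩
    · rw [Finset.filter_filter]
      refine Finset.sum_bij' (fun p _ => p.1) (fun j _ => (j, j)) ?_ ?_ ?_ ?_ ?_
      · intro a ha; simp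
      · intro a _; simp
      · intro a ha
        simp only [Finset.mem_filter, Finset.mem_univ, true_and] at ha
        have h1 : a.1 = a.2 := le_antisymm (not_lt.mp ha.1) (not_lt.mp ha.2)
        exact Prod.ext rfl h1
      · intro a _; rfl
      · intro a ha
        simp only [Finset.mem_filter, Finset.mem_univ, true_and] at ha
        have h1 : a.1 = a.2 := le_antisymm (not_lt.mp ha.1) (not_lt.mp ha.2)
        rw [← h1]
  have hupper : ∑ p ∈ univ.filter (fun p : Fin n × Fin n => p.1 < p.2), A p.1 p.2 =
      ∑ p ∈ univ.filter (fun p : Fin n × Fin n => p.2 < p.1), A p.2 p.1 := by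
    refine Finset.sum_bij' (fun p _ => Prod.swap p) (fun p _ => Prod.swap p) ?_ ?_ ?_ ?_ ?_
    · intro a ha; simp only [Finset.mem_filter, Finset.mem_univ, true_and] at ha ⊢; exact ha
    · intro a ha; simp only [Finset.mem_filter, Finset.mem_univ, true_and] at ha ⊢; exact ha
    · intro a _; rfl
    · intro a _; rfl
    · intro a _; rfl
  have htri : ∑ p ∈ univ.filter (fun p : Fin n × Fin n => p.2 < p.1), (A p.1 p.2 + A p.2 p.1) =
      ∑ q : Σ j : Fin n, Fin (j : ℕ), (A q.1 (emb q) + A (emb q) q.1) := by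
    refine Finset.sum_bij' (fun p hp => (⟨p.1, ⟨p.2.1, ?_⟩⟩ : Σ j : Fin n, Fin (j : ℕ)))
      (fun q _ => (q.1, emb q)) ?_ ?_ ?_ ?_ ?_
    · simp only [Finset.mem_filter, Finset.mem_univ, true_and] at hp; exact hp
    · intro a _; simp
    · intro q _
      simp only [Finset.mem_filter, Finset.mem_univ, true_and]
      exact q.2.2
    · intro a _; rfl
    · intro q _; rfl
    · intro a _; rfl
  rw [hnotsplit, hupper, ← add_assoc, ← Finset.sum_add_distrib, htri, add_comm]

section Helpers
variable {K V W' : Type*} [Field K] [AddCommGroup V] [Module K V]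
  [AddCommGroup W'] [Module K W']

lemma Rbil_le_card {ι : Type*} [Fintype ι] (t : V →ₗ[K] V →ₗ[K] W')
    (φ ψ : ι → V →ₗ[K] K) (w : ι → W')
    (h : ∀ x y, t x y = ∑ i, (φ i x * ψ i y) • w i) :
    Rbil K V W' t ≤ (Fintype.card ι : ℕ∞) := by
  apply sInf_le
  refine ⟨Fintype.card ι, φ ∘ (Fintype.equivFin ι).symm, ψ ∘ (Fintype.equivFin ι).symm,
    w ∘ (Fintype.equivFin ι).symm, rfl, fun x y => ?_⟩
  rw [h x y]
  exact (Equiv.sum_comp (Fintype.equivFin ι).symm fun i => (φ i x * ψ i y) • w i).symm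

lemma Ssym_le_card {ι : Type*} [Fintype ι] (t : V →ₗ[K] V →ₗ[K] W')
    (φ : ι → V →ₗ[K] K) (w : ι → W')
    (h : ∀ x y, t x y = ∑ i, (φ i x * φ i y) • w i) :
    Ssym K V W' t ≤ (Fintype.card ι : ℕ∞) := by
  apply sInf_le
  refine ⟨Fintype.card ι, φ ∘ (Fintype.equivFin ι).symm,
    w ∘ (Fintype.equivFin ι).symm, rfl, fun x y => ?_⟩
  rw [h x y]
  exact (Equiv.sum_comp (Fintype.equivFin ι).symm fun i => (φ i x * φ i y) • w i).symm

lemma bil_expand {n : ℕ} (b : Module.Basis (Fin n) K V) (t : V →ₗ[K] V →ₗ[K] W') (x y : V) :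
    t x y = ∑ j : Fin n, ∑ j' : Fin n, (b.repr x j * b.repr y j') • t (b j) (b j') := by
  conv_lhs => rw [← b.sum_repr x, ← b.sum_repr y]
  simp only [map_sum, LinearMap.sum_apply, map_smul, LinearMap.smul_apply, Finset.smul_sum,
    smul_smul]
  rw [Finset.sum_comm]
  exact Finset.sum_congr rfl fun j _ => Finset.sum_congr rfl fun j' _ => by rw [mul_comm]

lemma inner_collapse {r : ℕ} (bw : Module.Basis (Fin r) K W') (P : K) (z : W') :
    ∑ s : Fin r, P • (bw.repr z s • bw s) = P • z := by
  rw [← Finset.smul_sum, bw.sum_repr]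

end Helpers

section Decomp
variable {K V W' : Type*} [Field K] [AddCommGroup V] [Module K V]
  [AddCommGroup W'] [Module K W']

lemma decomp2 {n r : ℕ} (b : Module.Basis (Fin n) K V) (bw : Module.Basis (Fin r) K W')
    (t : V →ₗ[K] V →ₗ[K] W') (x y : V) :
    t x y = ∑ i : (Fin n × Fin n) × Fin r,
      (b.coord i.1.1 x * b.coord i.1.2 y) •
        (bw.repr (t (b i.1.1) (b i.1.2)) i.2 • bw i.2) := by
  have h0 : ∑ j : Fin n, ∑ j' : Fin n, ((b.repr x) j * (b.repr y) j') • t (b j) (b j')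
      = ∑ p : Fin n × Fin n, ((b.repr x) p.1 * (b.repr y) p.2) • t (b p.1) (b p.2) :=
    (Fintype.sum_prod_type
      (fun p : Fin n × Fin n => ((b.repr x) p.1 * (b.repr y) p.2) • t (b p.1) (b p.2))).symm
  rw [bil_expand b t x y, h0]
  conv_rhs => rw [Fintype.sum_prod_type]
  refine Finset.sum_congr rfl fun p _ => ?_
  simp only [Module.Basis.coord_apply]
  exact (inner_collapse bw _ _).symm

/-- linear forms for the symmetric decomposition -/
noncomputable def symPhi {n : ℕ} (b : Module.Basis (Fin n) K V) :
    (Fin n ⊕ (Σ j : Fin n, Fin (j : ℕ)) × Fin 3) → (V →ₗ[K] K)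
  | Sum.inl j => b.coord j
  | Sum.inr (q, k) =>
      if k = 0 then b.coord q.1 + b.coord (emb q)
      else if k = 1 then b.coord q.1 else b.coord (emb q)

noncomputable def symZ {n : ℕ} (b : Module.Basis (Fin n) K V) (t : V →ₗ[K] V →ₗ[K] W') :
    (Fin n ⊕ (Σ j : Fin n, Fin (j : ℕ)) × Fin 3) → W'
  | Sum.inl j => t (b j) (b j)
  | Sum.inr (q, k) => (if k = 0 then (1 : K) else -1) • t (b q.1) (b (emb q))

lemma decomp3 {n r : ℕ} (b : Module.Basis (Fin n) K V) (bw : Module.Basis (Fin r) K W')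
    (t : V →ₗ[K] V →ₗ[K] W')
    (hsym : ∀ x y, t x y = t y x) (x y : V) :
    t x y = ∑ i : (Fin n ⊕ (Σ j : Fin n, Fin (j : ℕ)) × Fin 3) × Fin r,
      (symPhi b i.1 x * symPhi b i.1 y) • (bw.repr (symZ b t i.1) i.2 • bw i.2) := by
  rw [bil_expand b t x y, sum_split, Fintype.sum_prod_type]
  have hcol : ∀ a, ∑ s : Fin r, (symPhi b a x * symPhi b a y) •
      (bw.repr (symZ b t a) s • bw s) = (symPhi b a x * symPhi b a y) • symZ b t a :=
    fun a => inner_collapse bw _ _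
  simp only [hcol]
  rw [Fintype.sum_sum_type]
  refine congrArg₂ (· + ·) ?_ ?_
  · exact Finset.sum_congr rfl fun j _ => by simp only [symPhi, symZ, Module.Basis.coord_apply]
  · rw [Fintype.sum_prod_type]
    refine Finset.sum_congr rfl fun q _ => ?_
    rw [Fin.sum_univ_three]
    simp only [symPhi, symZ, Module.Basis.coord_apply, LinearMap.add_apply, reduceIte,
      reduceCtorEq, one_smul, neg_smul, Fin.reduceEq, ite_true, ite_false]
    rw [hsym (b (emb q)) (b q.1)]
    module
end Decomp

lemma nat_card_bound (n r G : ℕ) (hG : G * 2 = n * (n - 1)) :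
    (n + G * 3) * r ≤ r * (n * (3 * n - 1) / 2) := by
  have h2 : n * (3 * n - 1) = (n + G * 3) * 2 := by
    rcases n with _ | m
    · omega
    · have hG' : (m + 1) * m = G * 2 := by simpa using hG.symm
      have e1 : 3 * (m + 1) - 1 = 3 * m + 2 := by omega
      have e2 : (m + 1) * (3 * m + 2) = 3 * ((m + 1) * m) + 2 * (m + 1) := by ring
      rw [e1, e2, hG']
      ring
  rw [h2, Nat.mul_div_cancel _ (by norm_num)]
  exact le_of_eq (mul_comm _ _)


set_option maxHeartbeats 1000000 in
/-- Let `M` be a free `K[C]`-module of rank `r`, `M = ⊕_{c∈C} c • W` with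
`r = dim_K W` (encoded by `ι : W → M` with `(f : C → W) ↦ ∑ c, c • ι (f c)`
bijective).  For a `C`-equivariant `K`-bilinear `t : L × L → M` with
`t x y = ∑ c, c • t_e(c⁻¹ • x, c⁻¹ • y)`, one has
`R_{K,C}(t) ≤ R_K(t_e) ≤ r (dim_K L)²`, and if `t` is symmetric then
`S_{K,C}(t) ≤ S_K(t_e) ≤ r · dim_K L · (3 dim_K L − 1)/2`. -/
theorem stmt7 (K : Type*) [Field K] (C : Type*) [Group C] [Fintype C]
    (L M W : Type*)
    [AddCommGroup L] [Module K L] [DistribMulAction C L] [SMulCommClass C K L]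
    [FiniteDimensional K L]
    [AddCommGroup M] [Module K M] [DistribMulAction C M] [SMulCommClass C K M]
    [AddCommGroup W] [Module K W] [FiniteDimensional K W]
    (ι : W →ₗ[K] M)
    (hΦ : Function.Bijective fun f : C → W => ∑ c : C, c • ι (f c))
    (t : L →ₗ[K] L →ₗ[K] M)
    (heq : ∀ (c : C) (x y : L), t (c • x) (c • y) = c • t x y)
    (te : L →ₗ[K] L →ₗ[K] W)
    (hte : ∀ x y, t x y = ∑ c : C, c • ι (te (c⁻¹ • x) (c⁻¹ • y))) :
    (RbilC K C L M (fun c => DistribMulAction.toLinearMap K L c)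
        (fun c => DistribMulAction.toLinearMap K M c) t ≤ Rbil K L W te ∧
      Rbil K L W te ≤ (Module.finrank K W : ℕ∞) * (Module.finrank K L : ℕ∞) ^ 2) ∧
    ((∀ x y, t x y = t y x) →
      SsymC K C L M (fun c => DistribMulAction.toLinearMap K L c)
          (fun c => DistribMulAction.toLinearMap K M c) t ≤ Ssym K L W te ∧
        Ssym K L W te ≤
          ((Module.finrank K W *
            (Module.finrank K L * (3 * Module.finrank K L - 1) / 2) : ℕ) : ℕ∞)) := by
  classical
  let bL : Module.Basis (Fin (Module.finrank K L)) K L := Module.finBasis K L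
  let bW : Module.Basis (Fin (Module.finrank K W)) K W := Module.finBasis K W
  -- Part 1a : RbilC ≤ Rbil
  have hRle : RbilC K C L M (fun c => DistribMulAction.toLinearMap K L c)
      (fun c => DistribMulAction.toLinearMap K M c) t ≤ Rbil K L W te := by
    apply sInf_le_sInf
    rintro N ⟨k, φ, ψ, w, rfl, hdec⟩
    refine ⟨k, fun i => LinearMap.pi fun c => (φ i).comp (DistribMulAction.toLinearMap K L c⁻¹),
      fun i => LinearMap.pi fun c => (ψ i).comp (DistribMulAction.toLinearMap K L c⁻¹),
      fun i => ι (w i), rfl, ?_, ?_, ?_⟩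
    · intro i c l x
      simp [LinearMap.pi_apply, mul_inv_rev, mul_smul]
      exact congrArg _ (mul_smul x⁻¹ c l).symm
    · intro i c l x
      simp [LinearMap.pi_apply, mul_inv_rev, mul_smul]
      exact congrArg _ (mul_smul x⁻¹ c l).symm
    · intro x y
      calc t x y = ∑ c : C, c • ι (te (c⁻¹ • x) (c⁻¹ • y)) := hte x y
        _ = ∑ c : C, ∑ i, (φ i (c⁻¹ • x) * ψ i (c⁻¹ • y)) • (c • ι (w i)) := by
            refine Finset.sum_congr rfl fun c _ => ?_
            rw [hdec, map_sum, Finset.smul_sum]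
            exact Finset.sum_congr rfl fun i _ => by rw [map_smul, smul_comm]
        _ = ∑ i, ∑ c : C, (φ i (c⁻¹ • x) * ψ i (c⁻¹ • y)) • (c • ι (w i)) := Finset.sum_comm
        _ = _ := rfl
  -- Part 1b : Rbil ≤ r n²
  have hR2 : Rbil K L W te ≤ (Module.finrank K W : ℕ∞) * (Module.finrank K L : ℕ∞) ^ 2 := by
    have hd := fun x y => decomp2 bL bW te x y
    refine le_trans (Rbil_le_card te _ _ _ hd) (le_of_eq ?_)
    simp only [Fintype.card_prod, Fintype.card_fin]
    push_cast
    ring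
  -- Part 2a : SsymC ≤ Ssym
  have hSle : SsymC K C L M (fun c => DistribMulAction.toLinearMap K L c)
      (fun c => DistribMulAction.toLinearMap K M c) t ≤ Ssym K L W te := by
    apply sInf_le_sInf
    rintro N ⟨k, φ, w, rfl, hdec⟩
    refine ⟨k, fun i => LinearMap.pi fun c => (φ i).comp (DistribMulAction.toLinearMap K L c⁻¹),
      fun i => ι (w i), rfl, ?_, ?_⟩
    · intro i c l x
      simp [LinearMap.pi_apply, mul_inv_rev, mul_smul]
      exact congrArg _ (mul_smul x⁻¹ c l).symm
    · intro x y
      calc t x y = ∑ c : C, c • ι (te (c⁻¹ • x) (c⁻¹ • y)) := hte x y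
        _ = ∑ c : C, ∑ i, (φ i (c⁻¹ • x) * φ i (c⁻¹ • y)) • (c • ι (w i)) := by
            refine Finset.sum_congr rfl fun c _ => ?_
            rw [hdec, map_sum, Finset.smul_sum]
            exact Finset.sum_congr rfl fun i _ => by rw [map_smul, smul_comm]
        _ = ∑ i, ∑ c : C, (φ i (c⁻¹ • x) * φ i (c⁻¹ • y)) • (c • ι (w i)) := Finset.sum_comm
        _ = _ := rfl
  refine ⟨⟨hRle, hR2⟩, fun hsym => ⟨hSle, ?_⟩⟩
  -- te is symmetric
  have hte_symm : ∀ x y, te x y = te y x := by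
    intro x y
    have h1 : (fun f : C → W => ∑ c : C, c • ι (f c)) (fun c => te (c⁻¹ • x) (c⁻¹ • y)) =
        (fun f : C → W => ∑ c : C, c • ι (f c)) (fun c => te (c⁻¹ • y) (c⁻¹ • x)) := by
      simp only
      rw [← hte, ← hte, hsym x y]
    have h2 := congrFun (hΦ.injective h1) 1
    simpa using h2
  -- Part 2b : Ssym ≤ r n (3n-1)/2
  have hd3 := fun x y => decomp3 bL bW te hte_symm x y
  refine le_trans (Ssym_le_card te _ _ hd3) ?_
  rw [Nat.cast_le]
  have hcard : Fintype.card ((Fin (Module.finrank K L) ⊕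
      (Σ j : Fin (Module.finrank K L), Fin (j : ℕ)) × Fin 3) × Fin (Module.finrank K W)) =
      (Module.finrank K L + (∑ j : Fin (Module.finrank K L), (j : ℕ)) * 3) *
        Module.finrank K W := by
    simp [Fintype.card_sigma, mul_comm]
  rw [hcard]
  apply nat_card_bound
  have := Fin.sum_univ_eq_sum_range (fun i => i) (Module.finrank K L)
  rw [this]
  exact Finset.sum_range_id_mul_two _
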